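/- Let R be a *-ring and p, q projectors with p - q Moore-Penrose invertible. Then (p-q)† = p(p-q)† + (p-q)†p - (p-q)(p-q)†. -/

import Mathlib

/-- `b` is a Moore-Penrose inverse of `a`. -/
def IsMP {R : Type*} [Ring R] [StarRing R] (a b : R) : Prop :=
  a * b * a = a ∧ b * a * b = b ∧ star (a * b) = a * b ∧ star (b * a) = b * a

/-- `p` is a projector: `p² = p = p*`. -/
def IsProjector {R : Type*} [Ring R] [StarRing R] (p : R) : Prop :=
  p * p = p ∧ star p = p

/-- `a` is *-cancellable. -/
def StarCancellable {R : Type*} [Ring R] [StarRing R] (a : R) : Prop :=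
  (∀ x : R, star a * a * x = 0 → a * x = 0) ∧ (∀ x : R, x * (a * star a) = 0 → x * a = 0)

/-!
Write `a = p - q`, which is self-adjoint, so its Moore-Penrose inverse `d` is self-adjoint and
commutes with `a`; put `e = a d = d a`. From `p² = p`, `q² = q` one gets `p a + a q = a`, hence
`d = d a d = d p e + e q d`. Annihilators of `a` are stable under `x ↦ p x` on the left and
`x ↦ x q` on the right, and `d` has the same annihilators as `a`, so
`d p (1 - e) = 0 = (1 - e) q d`.
Thus `d = d p + q d`, which is the claim since `(p - q) d = p d - q d`.
-/

section Idempotent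

variable {R : Type*} [Ring R] {p q : R}

theorem IsIdempotentElem.mul_sub_add_sub_mul (hp : IsIdempotentElem p)
    (hq : IsIdempotentElem q) : p * (p - q) + (p - q) * q = p - q := by
  rw [mul_sub, sub_mul, hp.eq, hq.eq]
  abel

theorem IsIdempotentElem.sub_mul_left_mul_eq_zero (hp : IsIdempotentElem p)
    (hq : IsIdempotentElem q) {x : R} (hx : (p - q) * x = 0) : (p - q) * (p * x) = 0 := by
  have hpx : p * x = q * x := sub_eq_zero.mp (by rwa [← sub_mul])
  rw [sub_mul, ← mul_assoc, hp.eq, hpx, ← mul_assoc, hq.eq, sub_self]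

theorem IsIdempotentElem.mul_right_mul_sub_eq_zero (hp : IsIdempotentElem p)
    (hq : IsIdempotentElem q) {x : R} (hx : x * (p - q) = 0) : x * q * (p - q) = 0 := by
  have hxp : x * p = x * q := sub_eq_zero.mp (by rwa [← mul_sub])
  calc x * q * (p - q) = x * p * p - x * p * q := by rw [hxp]; noncomm_ring
  _ = 0 := by rw [mul_assoc x p p, hp.eq, hxp, mul_assoc, hq.eq, sub_self]

end Idempotent

namespace IsMP

variable {R : Type*} [Ring R] [StarRing R] {a b c : R}

theorem unique (hb : IsMP a b) (hc : IsMP a c) : b = c := by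
  obtain ⟨hb1, hb2, hb3, hb4⟩ := hb
  obtain ⟨hc1, hc2, hc3, hc4⟩ := hc
  have hab : a * b = a * c :=
    calc a * b = (a * c) * (a * b) := by rw [← mul_assoc, hc1]
    _ = star ((a * b) * (a * c)) := by rw [star_mul, hb3, hc3]
    _ = a * c := by rw [← mul_assoc, hb1, hc3]
  have hba : b * a = c * a :=
    calc b * a = (b * a) * (c * a) := by rw [mul_assoc, ← mul_assoc a, hc1]
    _ = star ((c * a) * (b * a)) := by rw [star_mul, hb4, hc4]
    _ = c * a := by rw [mul_assoc, ← mul_assoc a, hb1, hc4]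
  calc b = b * a * b := hb2.symm
  _ = c * (a * c) := by rw [hba, mul_assoc, hab]
  _ = c := by rw [← mul_assoc, hc2]

theorem mul_eq_zero_of_star_mul_eq_zero (h : IsMP a b) {y : R} (hy : star a * y = 0) :
    b * y = 0 := by
  have hb : b = b * star b * star a :=
    calc b = b * (a * b) := by rw [← mul_assoc, h.2.1]
    _ = b * star b * star a := by rw [← h.2.2.1, star_mul, mul_assoc]
  rw [hb, mul_assoc, hy, mul_zero]

theorem mul_eq_zero_of_mul_star_eq_zero (h : IsMP a b) {y : R} (hy : y * star a = 0) :
    y * b = 0 := by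
  have hb : b = star a * star b * b :=
    calc b = b * a * b := h.2.1.symm
    _ = star a * star b * b := by rw [← h.2.2.2, star_mul]
  rw [hb, ← mul_assoc, ← mul_assoc, hy, zero_mul, zero_mul]

theorem mul_one_sub_mul (h : IsMP a b) : a * (1 - b * a) = 0 := by
  rw [mul_sub, mul_one, ← mul_assoc, h.1, sub_self]

theorem one_sub_mul_mul (h : IsMP a b) : (1 - a * b) * a = 0 := by
  rw [sub_mul, one_mul, h.1, sub_self]

theorem star (h : IsMP a b) : IsMP (star a) (star b) := by
  obtain ⟨h1, h2, h3, h4⟩ := h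
  refine ⟨?_, ?_, ?_, ?_⟩
  · rw [← star_mul, ← star_mul, ← mul_assoc, h1]
  · rw [← star_mul, ← star_mul, ← mul_assoc, h2]
  · rw [← star_mul, star_star, h4]
  · rw [← star_mul, star_star, h3]

theorem star_eq_of_isSelfAdjoint (h : IsMP a b) (ha : IsSelfAdjoint a) : Star.star b = b :=
  unique (ha.star_eq ▸ h.star) h

theorem mul_comm_of_isSelfAdjoint (h : IsMP a b) (ha : IsSelfAdjoint a) : b * a = a * b := by
  rw [← h.2.2.2, star_mul, ha.star_eq, h.star_eq_of_isSelfAdjoint ha]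

end IsMP

theorem stmt13 {R : Type*} [Ring R] [StarRing R] (p q d : R)
    (hp : IsProjector p) (hq : IsProjector q)
    (hd : IsMP (p - q) d) :
    d = p * d + d * p - (p - q) * d := by
  have hp' : IsIdempotentElem p := hp.1
  have hq' : IsIdempotentElem q := hq.1
  have hsa : IsSelfAdjoint (p - q) := by rw [IsSelfAdjoint, star_sub, hp.2, hq.2]
  have hdp : d * p * (d * (p - q)) = d * p := by
    have h := hd.mul_eq_zero_of_star_mul_eq_zero <| by
      rw [hsa.star_eq]; exact hp'.sub_mul_left_mul_eq_zero hq' hd.mul_one_sub_mul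
    rwa [mul_sub, mul_sub, mul_one, ← mul_assoc, sub_eq_zero, eq_comm] at h
  have hqd : (p - q) * d * q * d = q * d := by
    have h := hd.mul_eq_zero_of_mul_star_eq_zero <| by
      rw [hsa.star_eq]; exact hp'.mul_right_mul_sub_eq_zero hq' hd.one_sub_mul_mul
    rwa [sub_mul, sub_mul, one_mul, sub_eq_zero, eq_comm] at h
  have hsplit : d = d * p + q * d :=
    calc d = d * (p * (p - q) + (p - q) * q) * d := by rw [hp'.mul_sub_add_sub_mul hq', hd.2.1]
    _ = d * p * ((p - q) * d) + d * (p - q) * q * d := by noncomm_ring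
    _ = d * p + q * d := by
      rw [← hd.mul_comm_of_isSelfAdjoint hsa, hdp, hd.mul_comm_of_isSelfAdjoint hsa, hqd]
  rw [sub_mul]
  nth_rewrite 1 [hsplit]
  abel
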